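/- arXiv:0709.2436 — 4 statements merged into one kernel-verified Lean document; each statement's English description precedes it below -/
import Mathlib

section
/- Let λ be an infinite well-ordered cardinal (an aleph), let M be a set, and let X be a nonempty well-orderable set that is covered by a family (A_i)_{i∈M} of sets each of cardinality strictly less than λ (i.e., X = ⋃_{i∈M} A_i and |A_i| < λ for every i ∈ M). Then there is a surjection from λ × M onto X; in particular |X| ≤* λ·|M|. -/
open Cardinal

universe u

/-- `SurjLeStar m n` (`m ≤* n`) : `m = 0` or there is a surjection from a set of
cardinality `n` onto a set of cardinality `m`. -/
def SurjLeStar (m n : Cardinal.{u}) : Prop :=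
  m = 0 ∨ ∃ f : n.out → m.out, Function.Surjective f

/-- If `λ` is an aleph and a nonempty well-orderable set `X` is covered by a family
`(A i)_{i ∈ M}` of sets of cardinality `< λ`, then `λ × M` surjects onto `X`;
in particular `|X| ≤* λ · |M|`. -/
theorem cov_lt_wellOrdered_surj (lam : Cardinal.{u}) (hlam : ℵ₀ ≤ lam)
    (M X : Type u) (hne : Nonempty X)
    (hwo : ∃ r : X → X → Prop, IsWellOrder X r)
    (A : M → Set X) (hcov : ⋃ i, A i = Set.univ)
    (hsmall : ∀ i, #(A i) < lam) :
    (∃ f : lam.out × M → X, Function.Surjective f) ∧ SurjLeStar #X (lam * #M) := by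
  obtain ⟨x0⟩ := hne
  have hemb : ∀ i, Nonempty (A i ↪ lam.out) := by
    intro i
    have : #(A i) ≤ #lam.out := by
      rw [Cardinal.mk_out]; exact (hsmall i).le
    exact (Cardinal.le_def _ _).mp this
  -- define g i : lam.out → X
  classical
  set g : (i : M) → lam.out → X := fun i c =>
    if h : Nonempty (A i) then
      ((Function.invFun (hemb i).some c : A i) : X)
    else x0 with hg
  have hsurj : ∀ (x : X) (i : M), x ∈ A i → ∃ c, g i c = x := by
    intro x i hx
    have hni : Nonempty (A i) := ⟨⟨x, hx⟩⟩
    refine ⟨(hemb i).some ⟨x, hx⟩, ?_⟩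
    simp only [hg, dif_pos hni]
    exact congrArg Subtype.val (Function.leftInverse_invFun (hemb i).some.injective ⟨x, hx⟩)
  have hfs : ∃ f : lam.out × M → X, Function.Surjective f := by
    refine ⟨fun p => g p.2 p.1, fun x => ?_⟩
    have : x ∈ ⋃ i, A i := by rw [hcov]; trivial
    obtain ⟨i, hi⟩ := Set.mem_iUnion.mp this
    obtain ⟨c, hc⟩ := hsurj x i hi
    exact ⟨(c, i), hc⟩
  refine ⟨hfs, Or.inr ?_⟩
  obtain ⟨f, hf⟩ := hfs
  have e1 : (lam * #M).out ≃ lam.out × M := by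
    apply Classical.choice
    rw [← Cardinal.eq, Cardinal.mk_out, Cardinal.mk_prod, Cardinal.mk_out,
      Cardinal.lift_id, Cardinal.lift_id]
  have e2 : X ≃ (#X).out := by
    apply Classical.choice
    rw [← Cardinal.eq, Cardinal.mk_out]
  exact ⟨fun c => e2 (f (e1 c)), (e2.surjective.comp hf).comp e1.surjective⟩
end

section
/- For every infinite well-ordered cardinal λ, ¬Cov(<λ, λ, 2^λ): no set of cardinality 2^λ (e.g., the power set of λ) can be covered by a family of at most λ sets each of cardinality strictly less than λ. -/
open Cardinal

universe u

/-- `CovLt l m n` : some set of cardinality `n` can be covered by a family indexed by a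
set of cardinality at most `m` of sets each of cardinality strictly less than `l`. -/
def CovLt (l m n : Cardinal.{u}) : Prop :=
  ∃ (X M : Type u) (A : M → Set X),
    #X = n ∧ #M ≤ m ∧ (∀ i, #(A i) < l) ∧ ⋃ i, A i = Set.univ

/-- For every infinite well-ordered cardinal `λ`, `¬Cov(<λ, λ, 2^λ)`: no set of
cardinality `2^λ` is covered by at most `λ` sets each of cardinality `< λ`. -/
theorem not_covLt_power (lam : Cardinal.{u}) (hlam : ℵ₀ ≤ lam) :
    ¬ CovLt lam lam (2 ^ lam) := by
  rintro ⟨X, M, A, hX, hM, hA, hU⟩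
  have h1 : #(⋃ i, A i) ≤ #M * lam := by
    refine le_trans (Cardinal.mk_iUnion_le A) (mul_le_mul' le_rfl ?_)
    exact ciSup_le' fun i => (hA i).le
  have h2 : #(⋃ i, A i) ≤ lam := by
    calc #(⋃ i, A i) ≤ #M * lam := h1
    _ ≤ lam * lam := mul_le_mul' hM le_rfl
    _ = lam := Cardinal.mul_eq_self hlam
  rw [hU, Cardinal.mk_univ, hX] at h2
  exact absurd h2 (not_le.mpr (Cardinal.cantor lam))
end

section
/- For every infinite well-ordered cardinal λ, ¬Cov(λ, 2^λ, 2^{2^λ}): no set of cardinality 2^{2^λ} can be covered by a family of at most 2^λ sets each of cardinality at most λ. -/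
open Cardinal

universe u

/-- `Cov l m n` : some set of cardinality `n` can be covered by a family indexed by a
set of cardinality at most `m` of sets each of cardinality at most `l`. -/
def Cov (l m n : Cardinal.{u}) : Prop :=
  ∃ (X M : Type u) (A : M → Set X),
    #X = n ∧ #M ≤ m ∧ (∀ i, #(A i) ≤ l) ∧ ⋃ i, A i = Set.univ

/-- For every infinite well-ordered cardinal `λ`, `¬Cov(λ, 2^λ, 2^(2^λ))`. -/
theorem not_cov_power_power (lam : Cardinal.{u}) (hlam : ℵ₀ ≤ lam) :
    ¬ Cov lam ((2 : Cardinal.{u}) ^ lam) ((2 : Cardinal.{u}) ^ ((2 : Cardinal.{u}) ^ lam)) := by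
  rintro ⟨X, M, A, hX, hM, hA, hcov⟩
  have h1 : #X ≤ #M * lam := by
    calc #X = #(⋃ i, A i) := by rw [hcov, Cardinal.mk_univ]
    _ ≤ #M * ⨆ i, #(A i) := Cardinal.mk_iUnion_le A
    _ ≤ #M * lam := by
        gcongr
        exact ciSup_le' hA
  have h2 : #M * lam ≤ (2 : Cardinal.{u}) ^ lam := by
    calc #M * lam ≤ (2 ^ lam) * (2 ^ lam) := by
          gcongr
          exact (Cardinal.cantor lam).le
    _ = 2 ^ lam := by
          rw [Cardinal.mul_eq_self]
          exact hlam.trans (Cardinal.cantor lam).le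
  have h3 : (2 : Cardinal.{u}) ^ lam < (2 : Cardinal.{u}) ^ ((2:Cardinal.{u}) ^ lam) :=
    Cardinal.cantor _
  exact absurd (hX ▸ (h1.trans h2)) (not_le.mpr h3)
end

section
/- Let λ be an infinite well-ordered cardinal. If Cov(λ, λ⁺, 2^λ) holds — i.e., some set of cardinality 2^λ can be covered by a family of at most λ⁺ sets each of cardinality at most λ — then ℵ*(2^λ) = ℵ(2^λ) = λ⁺⁺. -/
open Cardinal

universe u

/-- The Lindenbaum number `ℵ*(n)`: the least nonzero (initial ordinal, i.e.)
cardinal onto which no set of cardinality `n` surjects. -/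
noncomputable def lindenbaum (n : Cardinal.{u}) : Cardinal.{u} :=
  sInf {c : Cardinal.{u} | c ≠ 0 ∧ ¬ SurjLeStar c n}

/-- The Hartogs number `ℵ(n)`: the least (initial ordinal, i.e.) cardinal that does
not inject into a set of cardinality `n`. -/
noncomputable def hartogs (n : Cardinal.{u}) : Cardinal.{u} :=
  sInf {c : Cardinal.{u} | ¬ c ≤ n}

/-!
With choice, surjective images and injective preimages are compared by the same order on
cardinals, so both the Hartogs and the Lindenbaum number of `𝔫` are `𝔫⁺`. A cover of a set
of size `2^λ` by `λ⁺` sets of size `λ` gives `2^λ ≤ λ⁺ · λ = λ⁺`, and Cantor's theorem gives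
`λ⁺ ≤ 2^λ`; hence `2^λ = λ⁺` and both numbers equal `λ⁺⁺`.
-/

theorem hartogs_eq_succ (n : Cardinal.{u}) : hartogs n = Order.succ n := by
  have h : {c : Cardinal.{u} | ¬ c ≤ n} = Set.Ici (Order.succ n) := by
    ext c
    simp
  rw [hartogs, h, csInf_Ici]

theorem surjLeStar_iff_le {c : Cardinal.{u}} (n : Cardinal.{u}) (hc : c ≠ 0) :
    SurjLeStar c n ↔ c ≤ n := by
  constructor
  · rintro (h | ⟨f, hf⟩)
    · exact absurd h hc
    · simpa only [mk_out] using mk_le_of_surjective hf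
  · intro h
    have : Nonempty c.out := by rwa [← mk_ne_zero_iff, mk_out]
    obtain ⟨f⟩ : Nonempty (c.out ↪ n.out) := by rwa [← le_def, mk_out, mk_out]
    exact Or.inr ⟨Function.invFun f, Function.invFun_surjective f.injective⟩

theorem lindenbaum_eq_succ (n : Cardinal.{u}) : lindenbaum n = Order.succ n := by
  have h : {c : Cardinal.{u} | c ≠ 0 ∧ ¬ SurjLeStar c n} = Set.Ici (Order.succ n) := by
    ext c
    simp only [Set.mem_ofPred_eq, Set.mem_Ici, Order.succ_le_iff]
    constructor
    · rintro ⟨hc, hs⟩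
      exact lt_of_not_ge ((surjLeStar_iff_le n hc).not.mp hs)
    · intro h
      have hc : c ≠ 0 := (zero_le.trans_lt h).ne'
      exact ⟨hc, (surjLeStar_iff_le n hc).not.mpr h.not_ge⟩
  rw [lindenbaum, h, csInf_Ici]

theorem Cov.le_mul {l m n : Cardinal.{u}} (h : Cov l m n) : n ≤ m * l := by
  obtain ⟨X, M, A, rfl, hM, hA, hcover⟩ := h
  calc #X = #(⋃ i, A i) := by rw [hcover, mk_univ]
    _ ≤ sum fun i => #(A i) := mk_iUnion_le_sum_mk
    _ ≤ sum fun _ : M => l := sum_le_sum _ _ hA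
    _ = #M * l := sum_const' M l
    _ ≤ m * l := mul_le_mul_left hM l

theorem two_power_eq_succ_of_cov {lam : Cardinal.{u}} (hlam : ℵ₀ ≤ lam)
    (hcov : Cov lam (Order.succ lam) (2 ^ lam)) : (2 : Cardinal.{u}) ^ lam = Order.succ lam := by
  refine le_antisymm ?_ (Order.succ_le_of_lt (cantor lam))
  calc (2 : Cardinal.{u}) ^ lam ≤ Order.succ lam * lam := hcov.le_mul
    _ = Order.succ lam :=
      Cardinal.mul_eq_left (hlam.trans (Order.le_succ lam)) (Order.le_succ lam)
        (aleph0_pos.trans_le hlam).ne'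

/-- If `λ` is an infinite well-ordered cardinal and `Cov(λ, λ⁺, 2^λ)` holds, then
`ℵ*(2^λ) = ℵ(2^λ) = λ⁺⁺`. -/
theorem lindenbaum_hartogs_of_cov (lam : Cardinal.{u}) (hlam : ℵ₀ ≤ lam)
    (hcov : Cov lam (Order.succ lam) ((2 : Cardinal.{u}) ^ lam)) :
    lindenbaum ((2 : Cardinal.{u}) ^ lam) = Order.succ (Order.succ lam) ∧
      hartogs ((2 : Cardinal.{u}) ^ lam) = Order.succ (Order.succ lam) := by
  rw [lindenbaum_eq_succ, hartogs_eq_succ, two_power_eq_succ_of_cov hlam hcov]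
  exact ⟨rfl, rfl⟩
end
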